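/- In the avg-EQ reduction instance built from a simple graph H = (V, E) and an integer k ≥ 4 with |V| + |E| ≥ k², under avg-EQ utilities, the following holds: if a coalition C blocks the coalition structure Γ and the edge player e' belongs to C for some edge e = xy ∈ E, then all four players b_{x,e}, b_{y,e}, x', y' belong to C, and |C| < k'. -/

import Mathlib

open Finset
open scoped Classical

section AHGDefs

variable {N : Type*} [Fintype N] [DecidableEq N]

/-- The set of friends of player `i` inside coalition `C`. -/
noncomputable def friendsIn (G : SimpleGraph N) (C : Finset N) (i : N) : Finset N :=
  C.filter fun j => G.Adj i j

/-- The friend-oriented valuation of coalition `C` by player `i`: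
`val_i(C) = n·|F_i ∩ C| − |E_i ∩ C|`. -/
noncomputable def fval (G : SimpleGraph N) (C : Finset N) (i : N) : ℤ :=
  (Fintype.card N : ℤ) * ((friendsIn G C i).card : ℤ)
    - ((C.filter fun j => ¬ G.Adj i j ∧ j ≠ i).card : ℤ)

/-- Average-based equal-treatment utility. -/
noncomputable def utilAvgEQ (G : SimpleGraph N) (C : Finset N) (i : N) : ℚ :=
  (∑ c ∈ insert i (friendsIn G C i), (fval G C c : ℚ)) /
    ((insert i (friendsIn G C i)).card : ℚ)

/-- Average-based altruistic-treatment utility with weight `w`. -/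
noncomputable def utilAvgAL (G : SimpleGraph N) (w : ℚ) (C : Finset N) (i : N) : ℚ :=
  (fval G C i : ℚ) +
    w * (if (friendsIn G C i).Nonempty then
          (∑ c ∈ friendsIn G C i, (fval G C c : ℚ)) / ((friendsIn G C i).card : ℚ)
         else 0)

/-- Min-based equal-treatment utility. -/
noncomputable def utilMinEQ (G : SimpleGraph N) (C : Finset N) (i : N) : ℤ :=
  (insert i (friendsIn G C i)).inf' (insert_nonempty _ _) (fval G C)

/-- Min-based altruistic-treatment utility with weight `w`. -/
noncomputable def utilMinAL (G : SimpleGraph N) (w : ℤ) (C : Finset N) (i : N) : ℤ :=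
  fval G C i +
    w * (if h : (friendsIn G C i).Nonempty then (friendsIn G C i).inf' h (fval G C) else 0)

/-- A coalition structure (partition of the players), given as the map sending
each player to its coalition. -/
structure CoalitionStructure (N : Type*) [Fintype N] [DecidableEq N] where
  part : N → Finset N
  mem_part : ∀ i, i ∈ part i
  part_eq : ∀ i j, j ∈ part i → part j = part i

/-- A (nonempty) coalition `C` blocks the coalition structure `Γ`. -/
def Blocks {α : Type*} [LT α] (util : Finset N → N → α) (Γ : CoalitionStructure N)
    (C : Finset N) : Prop :=
  C.Nonempty ∧ ∀ i ∈ C, util (Γ.part i) i < util C i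

/-- Core stability: no nonempty coalition blocks `Γ`. -/
def CoreStable {α : Type*} [LT α] (util : Finset N → N → α)
    (Γ : CoalitionStructure N) : Prop :=
  ¬ ∃ C : Finset N, Blocks util Γ C

/-- The base clique of a `(d,k')`-dome gadget on `P` with top player `top`
and mid players `mid`. -/
noncomputable def domeBase {d : ℕ} (P : Finset N) (top : N) (mid : Fin d → N) : Finset N :=
  P \ insert top (Finset.univ.image mid)

/-- `P` carries a `(d,k')`-dome gadget of the graph `G`, with top player `top`,
mid players `mid i` and fringe players `fringe i`. -/
structure IsDomeGadget (G : SimpleGraph N) (d k' : ℕ) (P : Finset N) (top : N)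
    (mid fringe : Fin d → N) : Prop where
  card_eq : P.card = k'
  top_mem : top ∈ P
  mid_mem : ∀ i, mid i ∈ P
  mid_inj : Function.Injective mid
  mid_ne_top : ∀ i, mid i ≠ top
  fringe_mem : ∀ i, fringe i ∈ domeBase P top mid
  fringe_inj : Function.Injective fringe
  adj_iff : ∀ x ∈ P, ∀ y ∈ P, (G.Adj x y ↔
    ((x = top ∧ ∃ i, y = mid i) ∨ (y = top ∧ ∃ i, x = mid i) ∨
     (x ∈ domeBase P top mid ∧ y ∈ domeBase P top mid ∧ x ≠ y) ∨
     (∃ i, (x = mid i ∧ y = fringe i) ∨ (y = mid i ∧ x = fringe i))))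

/-- `P` carries a `(d,k')`-dome gadget with top player `top` (mid and fringe
players existentially quantified). -/
def HasDomeGadget (G : SimpleGraph N) (d k' : ℕ) (P : Finset N) (top : N) : Prop :=
  ∃ mid fringe : Fin d → N, IsDomeGadget G d k' P top mid fringe

/-- The gadget size `k' = k + 3·(k choose 2) + 1` of the average-based reductions. -/
def avgK' (k : ℕ) : ℕ := k + 3 * Nat.choose k 2 + 1

variable {V : Type*} [Fintype V] [DecidableEq V]

/-- `Γ` is the coalition structure of the average-based reduction instances: its
coalitions are exactly the gadget player sets. -/
def IsAvgGamma (H : SimpleGraph V) (Pv : V → Finset N) (Pe : Sym2 V → Finset N)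
    (Pve : V → Sym2 V → Finset N) (Γ : CoalitionStructure N) : Prop :=
  (∀ v : V, ∀ i ∈ Pv v, Γ.part i = Pv v) ∧
  (∀ e ∈ H.edgeSet, ∀ i ∈ Pe e, Γ.part i = Pe e) ∧
  (∀ (v : V), ∀ e ∈ H.edgeSet, v ∈ e → ∀ i ∈ Pve v e, Γ.part i = Pve v e)

/-- The avg-EQ reduction instance built from the graph `H` and `k ≥ 4`:
`G` is the constructed network of friends; `Pv v` carries a `(k−1,k')`-dome gadget
with top player `vp v`, `Pe e` a `(2,k')`-dome gadget with top player `ep e`, and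
`Pve v e` a `(2,k')`-dome gadget with top player `bp v e`. Each `bp v e` is further
adjacent to `vp v` and `ep e`, and there are no other edges. -/
structure AvgEQReduction (H : SimpleGraph V) (k : ℕ) (G : SimpleGraph N)
    (Pv : V → Finset N) (Pe : Sym2 V → Finset N) (Pve : V → Sym2 V → Finset N)
    (vp : V → N) (ep : Sym2 V → N) (bp : V → Sym2 V → N) : Prop where
  dome_v : ∀ v : V, HasDomeGadget G (k - 1) (avgK' k) (Pv v) (vp v)
  dome_e : ∀ e ∈ H.edgeSet, HasDomeGadget G 2 (avgK' k) (Pe e) (ep e)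
  dome_ve : ∀ (v : V), ∀ e ∈ H.edgeSet, v ∈ e →
    HasDomeGadget G 2 (avgK' k) (Pve v e) (bp v e)
  disj_vv : ∀ v w : V, v ≠ w → Disjoint (Pv v) (Pv w)
  disj_ee : ∀ e ∈ H.edgeSet, ∀ f ∈ H.edgeSet, e ≠ f → Disjoint (Pe e) (Pe f)
  disj_bb : ∀ (v : V), ∀ e ∈ H.edgeSet, v ∈ e → ∀ (w : V), ∀ f ∈ H.edgeSet, w ∈ f →
    (v, e) ≠ (w, f) → Disjoint (Pve v e) (Pve w f)
  disj_v_e : ∀ (v : V), ∀ e ∈ H.edgeSet, Disjoint (Pv v) (Pe e)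
  disj_v_b : ∀ (v w : V), ∀ f ∈ H.edgeSet, w ∈ f → Disjoint (Pv v) (Pve w f)
  disj_e_b : ∀ e ∈ H.edgeSet, ∀ (w : V), ∀ f ∈ H.edgeSet, w ∈ f →
    Disjoint (Pe e) (Pve w f)
  cover : ∀ x : N, (∃ v : V, x ∈ Pv v) ∨ (∃ e ∈ H.edgeSet, x ∈ Pe e) ∨
    (∃ (v : V), ∃ e ∈ H.edgeSet, v ∈ e ∧ x ∈ Pve v e)
  adj_bv : ∀ (v : V), ∀ e ∈ H.edgeSet, v ∈ e → G.Adj (bp v e) (vp v)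
  adj_be : ∀ (v : V), ∀ e ∈ H.edgeSet, v ∈ e → G.Adj (bp v e) (ep e)
  adj_cases : ∀ x y : N, G.Adj x y →
    (∃ v : V, x ∈ Pv v ∧ y ∈ Pv v) ∨
    (∃ e ∈ H.edgeSet, x ∈ Pe e ∧ y ∈ Pe e) ∨
    (∃ (v : V), ∃ e ∈ H.edgeSet, v ∈ e ∧ x ∈ Pve v e ∧ y ∈ Pve v e) ∨
    (∃ (v : V), ∃ e ∈ H.edgeSet, v ∈ e ∧
      ((x = bp v e ∧ y = vp v) ∨ (y = bp v e ∧ x = vp v))) ∨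
    (∃ (v : V), ∃ e ∈ H.edgeSet, v ∈ e ∧
      ((x = bp v e ∧ y = ep e) ∨ (y = bp v e ∧ x = ep e)))
end AHGDefs

/-!
Writing `F_i(C)` for the friends of `i` in `C`, one has `val_i(C) = (n + 1)|F_i(C)| - |C| + 1`, so
the avg-EQ utility of `i ∈ C` is `(n + 1) A_i(C) - |C| + 1`, where `A_i(C)` is the mean of
`|F_c(C)|` over `c ∈ {i} ∪ F_i(C)`. Hence a member `i` of a blocking coalition `C` cannot have
`A_i(C) + δ ≤ A_i(Γ(i))` once `(n + 1) δ ≥ |Γ(i)| - |C|`, and as `n ≥ k'·k² ≥ k'²/2` this already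
holds for `δ` of order `1/k'`. Comparing friend counts inside and outside a `(2,k')`-dome then
shows that no base player joins such a `C` once `C` contains the top or a player outside the
dome, and after that that no mid player joins either. For `e = xy` this leaves `e'` with friends
among `b_{x,e}, b_{y,e}` only, and `b_{v,e}` with friends among `v', e'` only. In `P_e` the mean at
`e'` is `2`; in `C` it is `2` if all four players are present and at most `5/3` otherwise, and in
the first case the blocking inequality at `e'` reads `0 < k' - |C|`.
-/

section Utility

variable {N : Type*} {G : SimpleGraph N} {C P : Finset N} {i j top a a' g : N}

theorem mem_friendsIn : j ∈ friendsIn G C i ↔ j ∈ C ∧ G.Adj i j := mem_filter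

theorem friendsIn_subset : friendsIn G C i ⊆ C := filter_subset _ _

theorem insert_friendsIn_subset [DecidableEq N] (hi : i ∈ C) :
    insert i (friendsIn G C i) ⊆ C :=
  insert_subset hi friendsIn_subset

theorem friendsIn_eq_inter [DecidableEq N] (hP : ∀ z, G.Adj i z → z ∈ P) :
    friendsIn G C i = friendsIn G P i ∩ C := by
  ext z
  simp only [mem_inter, mem_friendsIn]
  exact ⟨fun ⟨hz, h⟩ => ⟨⟨hP z h, h⟩, hz⟩, fun ⟨⟨_, h⟩, hz⟩ => ⟨hz, h⟩⟩

theorem fval_eq [Fintype N] [DecidableEq N] (hi : i ∈ C) :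
    fval G C i = ((Fintype.card N : ℤ) + 1) * #(friendsIn G C i) - #C + 1 := by
  have hsplit := card_filter_add_card_filter_not (s := C.erase i) (G.Adj i)
  have hF : (C.erase i).filter (G.Adj i) = friendsIn G C i := by
    ext z
    simp only [mem_filter, mem_erase, mem_friendsIn]
    exact ⟨fun ⟨⟨_, hz⟩, h⟩ => ⟨hz, h⟩, fun ⟨hz, h⟩ => ⟨⟨(G.ne_of_adj h).symm, hz⟩, h⟩⟩
  have hE : (C.erase i).filter (fun j => ¬ G.Adj i j) =
      C.filter fun j => ¬ G.Adj i j ∧ j ≠ i := by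
    ext z
    simp only [mem_filter, mem_erase]
    tauto
  rw [hF, hE, card_erase_of_mem hi] at hsplit
  have hC : 1 ≤ #C := card_pos.2 ⟨i, hi⟩
  have hsplit' :
      (#(friendsIn G C i) : ℤ) + #(C.filter fun j => ¬ G.Adj i j ∧ j ≠ i) = #C - 1 := by
    omega
  unfold fval
  linarith

noncomputable def avgFriends [DecidableEq N] (G : SimpleGraph N) (C : Finset N) (i : N) : ℚ :=
  (∑ c ∈ insert i (friendsIn G C i), (#(friendsIn G C c) : ℚ)) / #(insert i (friendsIn G C i))

theorem utilAvgEQ_eq [Fintype N] [DecidableEq N] (hi : i ∈ C) :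
    utilAvgEQ G C i = ((Fintype.card N : ℚ) + 1) * avgFriends G C i - #C + 1 := by
  have hval : ∀ c ∈ insert i (friendsIn G C i),
      (fval G C c : ℚ) = ((Fintype.card N : ℚ) + 1) * #(friendsIn G C c) - #C + 1 := by
    intro c hc
    exact_mod_cast fval_eq (insert_friendsIn_subset hi hc)
  have hS : (#(insert i (friendsIn G C i)) : ℚ) ≠ 0 := by positivity
  rw [utilAvgEQ, avgFriends, sum_congr rfl hval, sum_add_distrib, sum_sub_distrib, ← mul_sum,
    sum_const, sum_const, nsmul_eq_mul, nsmul_eq_mul]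
  field_simp

theorem avgFriends_le_of_forall_le [DecidableEq N] {a : ℚ}
    (h : ∀ c ∈ insert i (friendsIn G C i), (#(friendsIn G C c) : ℚ) ≤ a) :
    avgFriends G C i ≤ a := by
  rw [avgFriends, div_le_iff₀ (by positivity), mul_comm, ← nsmul_eq_mul]
  exact sum_le_card_nsmul _ _ _ h

theorem Blocks.avgFriends_sub_lt [Fintype N] [DecidableEq N] {Γ : CoalitionStructure N}
    (hC : Blocks (utilAvgEQ G) Γ C) (hi : i ∈ C) (hP : Γ.part i = P) :
    ((Fintype.card N : ℚ) + 1) * (avgFriends G P i - avgFriends G C i) < #P - #C := by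
  have h := hC.2 i hi
  rw [hP, utilAvgEQ_eq (hP ▸ Γ.mem_part i), utilAvgEQ_eq hi] at h
  linarith

theorem Blocks.false_of_avgFriends_add_le [Fintype N] [DecidableEq N] {Γ : CoalitionStructure N}
    (hC : Blocks (utilAvgEQ G) Γ C) (hi : i ∈ C) (hP : Γ.part i = P) {δ : ℚ}
    (havg : avgFriends G C i + δ ≤ avgFriends G P i)
    (hδ : (#P : ℚ) - #C ≤ ((Fintype.card N : ℚ) + 1) * δ) : False := by
  have h := hC.avgFriends_sub_lt hi hP
  have : ((Fintype.card N : ℚ) + 1) * δ ≤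
      ((Fintype.card N : ℚ) + 1) * (avgFriends G P i - avgFriends G C i) :=
    mul_le_mul_of_nonneg_left (by linarith) (by positivity)
  linarith

theorem friendsIn_eq_of_forall_adj_iff {S : Finset N} (hS : S ⊆ P)
    (h : ∀ z ∈ P, G.Adj i z ↔ z ∈ S) : friendsIn G P i = S := by
  ext z
  rw [mem_friendsIn]
  exact ⟨fun ⟨hz, hiz⟩ => (h z hz).1 hiz, fun hz => ⟨hS hz, (h z (hS hz)).2 hz⟩⟩

def AttachedAt (G : SimpleGraph N) (P : Finset N) (top a a' : N) : Prop :=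
  ∀ g ∈ P, ∀ z, G.Adj g z → z ∈ P ∨ g = top ∧ (z = a ∨ z = a')

theorem AttachedAt.mem_of_adj (hA : AttachedAt G P top a a') (hg : g ∈ P) (hgt : g ≠ top)
    {z : N} (h : G.Adj g z) : z ∈ P :=
  (hA g hg z h).resolve_right fun h' => hgt h'.1

theorem AttachedAt.friendsIn_eq_inter [DecidableEq N] (hA : AttachedAt G P top a a')
    (hg : g ∈ P) (hgt : g ≠ top) : friendsIn G C g = friendsIn G P g ∩ C :=
  _root_.friendsIn_eq_inter fun _ h => hA.mem_of_adj hg hgt h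

theorem AttachedAt.friendsIn_top_eq [DecidableEq N] (hA : AttachedAt G P top a a')
    (htop : top ∈ P) (hCP : C ∩ P ⊆ {top}) (ha : G.Adj top a) (ha' : G.Adj top a') :
    friendsIn G C top = {a, a'} ∩ C := by
  ext z
  rw [mem_friendsIn, mem_inter, mem_insert, mem_singleton]
  constructor
  · rintro ⟨hz, h⟩
    refine ⟨((hA top htop z h).resolve_left fun hzP => ?_).2, hz⟩
    exact G.ne_of_adj h (mem_singleton.1 (hCP (mem_inter.2 ⟨hz, hzP⟩))).symm
  · rintro ⟨rfl | rfl, hz⟩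
    exacts [⟨hz, ha⟩, ⟨hz, ha'⟩]

theorem avgFriends_le_or_eq_of_path [DecidableEq N] {t u u' : N} (ht : t ∈ C) (haa' : a ≠ a')
    (hta : t ≠ a) (hta' : t ≠ a') (hut : u ≠ t) (hu't : u' ≠ t)
    (hFt : friendsIn G C t = {a, a'} ∩ C) (hFa : friendsIn G C a = {u, t} ∩ C)
    (hFa' : friendsIn G C a' = {u', t} ∩ C) :
    avgFriends G C t ≤ 5 / 3 ∨ (a ∈ C ∧ a' ∈ C ∧ u ∈ C ∧ u' ∈ C ∧ avgFriends G C t = 2) := by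
  by_cases ha : a ∈ C <;> by_cases ha' : a' ∈ C <;> by_cases hu : u ∈ C <;>
    by_cases hu' : u' ∈ C <;>
    simp [avgFriends, hFt, hFa, hFa', insert_inter_of_mem, insert_inter_of_notMem, sum_insert,
      ha, ha', hu, hu', ht, hta, hta', haa', hut, hu't] <;>
    norm_num

end Utility

namespace IsDomeGadget

section General

variable {N : Type*} [DecidableEq N] {G : SimpleGraph N} {d K : ℕ} {P C : Finset N}
  {top a a' : N} {mid fringe : Fin d → N}

theorem mem_domeBase {z : N} :
    z ∈ domeBase P top mid ↔ z ∈ P ∧ z ≠ top ∧ ∀ i, z ≠ mid i := by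
  simp [domeBase, eq_comm]

theorem top_notMem_domeBase : top ∉ domeBase P top mid := by
  simp [mem_domeBase]

theorem mid_notMem_domeBase (i : Fin d) : mid i ∉ domeBase P top mid := by
  simp [mem_domeBase]

theorem domeBase_subset : domeBase P top mid ⊆ P := sdiff_subset

theorem ne_top_of_mem_domeBase {g : N} (hg : g ∈ domeBase P top mid) : g ≠ top :=
  fun h => top_notMem_domeBase (h ▸ hg)

theorem card_domeBase (hP : IsDomeGadget G d K P top mid fringe) :
    #(domeBase P top mid) + d + 1 = K := by
  have hsub : insert top (univ.image mid) ⊆ P :=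
    insert_subset hP.top_mem (image_subset_iff.2 fun i _ => hP.mid_mem i)
  have htop : top ∉ univ.image mid := by simpa using fun i => hP.mid_ne_top i
  have h := card_sdiff_add_card_eq_card hsub
  rw [card_insert_of_notMem htop, card_image_of_injective _ hP.mid_inj, card_univ,
    Fintype.card_fin, hP.card_eq] at h
  rw [domeBase, ← h, add_assoc]

theorem fringe_ne_top (hP : IsDomeGadget G d K P top mid fringe) (i : Fin d) : fringe i ≠ top :=
  fun h => top_notMem_domeBase (h ▸ hP.fringe_mem i)

theorem fringe_ne_mid (hP : IsDomeGadget G d K P top mid fringe) (i j : Fin d) :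
    fringe i ≠ mid j :=
  fun h => mid_notMem_domeBase j (h ▸ hP.fringe_mem i)

theorem adj_top_iff (hP : IsDomeGadget G d K P top mid fringe) {z : N} (hz : z ∈ P) :
    G.Adj top z ↔ ∃ i, z = mid i := by
  rw [hP.adj_iff top hP.top_mem z hz]
  constructor
  · rintro (⟨-, h⟩ | ⟨-, i, h⟩ | ⟨h, -⟩ | ⟨i, ⟨h, -⟩ | ⟨-, h⟩⟩)
    · exact h
    · exact absurd h.symm (hP.mid_ne_top i)
    · exact absurd h top_notMem_domeBase
    · exact absurd h.symm (hP.mid_ne_top i)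
    · exact absurd h.symm (hP.fringe_ne_top i)
  · rintro ⟨i, rfl⟩
    exact Or.inl ⟨rfl, i, rfl⟩

theorem adj_mid_iff (hP : IsDomeGadget G d K P top mid fringe) (i : Fin d) {z : N}
    (hz : z ∈ P) : G.Adj (mid i) z ↔ z = top ∨ z = fringe i := by
  rw [hP.adj_iff _ (hP.mid_mem i) z hz]
  constructor
  · rintro (⟨h, -⟩ | ⟨h, -⟩ | ⟨h, -⟩ | ⟨j, ⟨h, rfl⟩ | ⟨-, h⟩⟩)
    · exact absurd h (hP.mid_ne_top i)
    · exact Or.inl h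
    · exact absurd h (mid_notMem_domeBase i)
    · exact Or.inr (by rw [hP.mid_inj h])
    · exact absurd h.symm (hP.fringe_ne_mid j i)
  · rintro (rfl | rfl)
    · exact Or.inr (Or.inl ⟨rfl, i, rfl⟩)
    · exact Or.inr (Or.inr (Or.inr ⟨i, Or.inl ⟨rfl, rfl⟩⟩))

theorem adj_iff_of_mem_domeBase (hP : IsDomeGadget G d K P top mid fringe) {g z : N}
    (hg : g ∈ domeBase P top mid) (hz : z ∈ P) :
    G.Adj g z ↔ (z ∈ domeBase P top mid ∧ z ≠ g) ∨ ∃ i, g = fringe i ∧ z = mid i := by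
  rw [hP.adj_iff g (domeBase_subset hg) z hz]
  constructor
  · rintro (⟨rfl, -⟩ | ⟨-, i, rfl⟩ | ⟨-, hz, hgz⟩ | ⟨i, ⟨rfl, -⟩ | ⟨rfl, rfl⟩⟩)
    · exact absurd hg top_notMem_domeBase
    · exact absurd hg (mid_notMem_domeBase i)
    · exact Or.inl ⟨hz, hgz.symm⟩
    · exact absurd hg (mid_notMem_domeBase i)
    · exact Or.inr ⟨i, rfl, rfl⟩
  · rintro (⟨hz, hzg⟩ | ⟨i, rfl, rfl⟩)
    · exact Or.inr (Or.inr (Or.inl ⟨hg, hz, hzg.symm⟩))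
    · exact Or.inr (Or.inr (Or.inr ⟨i, Or.inr ⟨rfl, rfl⟩⟩))

theorem friendsIn_top (hP : IsDomeGadget G d K P top mid fringe) :
    friendsIn G P top = univ.image mid :=
  friendsIn_eq_of_forall_adj_iff (image_subset_iff.2 fun i _ => hP.mid_mem i) fun z hz => by
    simp [hP.adj_top_iff hz, eq_comm]

theorem friendsIn_mid (hP : IsDomeGadget G d K P top mid fringe) (i : Fin d) :
    friendsIn G P (mid i) = {top, fringe i} :=
  friendsIn_eq_of_forall_adj_iff
    (insert_subset hP.top_mem (singleton_subset_iff.2 (domeBase_subset (hP.fringe_mem i))))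
    fun z hz => by simp [hP.adj_mid_iff i hz]

theorem friendsIn_fringe (hP : IsDomeGadget G d K P top mid fringe) (i : Fin d) :
    friendsIn G P (fringe i) = insert (mid i) ((domeBase P top mid).erase (fringe i)) :=
  friendsIn_eq_of_forall_adj_iff
    (insert_subset (hP.mid_mem i) ((erase_subset _ _).trans domeBase_subset)) fun z hz => by
      rw [hP.adj_iff_of_mem_domeBase (hP.fringe_mem i) hz]
      simp [hP.fringe_inj.eq_iff, and_comm, or_comm]

theorem friendsIn_of_mem_domeBase (hP : IsDomeGadget G d K P top mid fringe) {g : N}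
    (hg : g ∈ domeBase P top mid) (hnf : ∀ i, g ≠ fringe i) :
    friendsIn G P g = (domeBase P top mid).erase g :=
  friendsIn_eq_of_forall_adj_iff ((erase_subset _ _).trans domeBase_subset) fun z hz => by
    rw [hP.adj_iff_of_mem_domeBase hg hz]
    simp [hnf, and_comm]

theorem card_friendsIn_top (hP : IsDomeGadget G d K P top mid fringe) :
    #(friendsIn G P top) = d := by
  rw [hP.friendsIn_top, card_image_of_injective _ hP.mid_inj, card_univ, Fintype.card_fin]

theorem card_friendsIn_mid (hP : IsDomeGadget G d K P top mid fringe) (i : Fin d) :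
    #(friendsIn G P (mid i)) = 2 := by
  rw [hP.friendsIn_mid, card_pair (hP.fringe_ne_top i).symm]

theorem card_friendsIn_fringe (hP : IsDomeGadget G d K P top mid fringe) (i : Fin d) :
    #(friendsIn G P (fringe i)) = #(domeBase P top mid) := by
  rw [hP.friendsIn_fringe, card_insert_of_notMem
    (fun h => mid_notMem_domeBase i (mem_of_mem_erase h)), card_erase_add_one (hP.fringe_mem i)]

theorem card_friendsIn_of_mem_domeBase (hP : IsDomeGadget G d K P top mid fringe) {g : N}
    (hg : g ∈ domeBase P top mid) :
    (#(friendsIn G P g) : ℚ) =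
      #(domeBase P top mid) - 1 + if g ∈ univ.image fringe then 1 else 0 := by
  by_cases hf : g ∈ univ.image fringe
  · obtain ⟨i, -, rfl⟩ := mem_image.1 hf
    rw [if_pos hf, hP.card_friendsIn_fringe]
    ring
  · rw [if_neg hf, hP.friendsIn_of_mem_domeBase hg (by simpa [eq_comm] using hf),
      card_erase_of_mem hg, Nat.cast_pred (card_pos.2 ⟨g, hg⟩)]
    ring

theorem sum_card_friendsIn_domeBase (hP : IsDomeGadget G d K P top mid fringe) :
    ∑ g ∈ domeBase P top mid, (#(friendsIn G P g) : ℚ) =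
      #(domeBase P top mid) * (#(domeBase P top mid) - 1) + d := by
  have hfr : univ.image fringe ⊆ domeBase P top mid :=
    image_subset_iff.2 fun i _ => hP.fringe_mem i
  rw [sum_congr rfl fun g hg => hP.card_friendsIn_of_mem_domeBase hg, sum_add_distrib, sum_boole,
    sum_const, nsmul_eq_mul, filter_mem_eq_inter, inter_eq_right.2 hfr,
    card_image_of_injective _ hP.fringe_inj, card_univ, Fintype.card_fin]

theorem avgFriends_top (hP : IsDomeGadget G d K P top mid fringe) :
    avgFriends G P top = 3 * d / (d + 1) := by
  have htop : top ∉ univ.image mid := by simpa using fun i => hP.mid_ne_top i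
  have hS : insert top (friendsIn G P top) = insert top (univ.image mid) := by
    rw [hP.friendsIn_top]
  rw [avgFriends, hS, sum_insert htop, card_insert_of_notMem htop,
    sum_image fun i _ j _ h => hP.mid_inj h]
  simp [hP.card_friendsIn_top, hP.card_friendsIn_mid, card_image_of_injective _ hP.mid_inj]
  ring

theorem avgFriends_mid (hP : IsDomeGadget G d K P top mid fringe) (i : Fin d) :
    avgFriends G P (mid i) = (#(domeBase P top mid) + d + 2) / 3 := by
  have h₁ : mid i ∉ ({top, fringe i} : Finset N) := by
    simp [hP.mid_ne_top i, (hP.fringe_ne_mid i i).symm]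
  have h₂ : top ∉ ({fringe i} : Finset N) := by simpa using (hP.fringe_ne_top i).symm
  have hS : insert (mid i) (friendsIn G P (mid i)) = {mid i, top, fringe i} := by
    rw [hP.friendsIn_mid]
  rw [avgFriends, hS, sum_insert h₁, sum_insert h₂, sum_singleton,
    card_insert_of_notMem h₁, card_pair (hP.fringe_ne_top i).symm, hP.card_friendsIn_mid,
    hP.card_friendsIn_top, hP.card_friendsIn_fringe]
  push_cast
  ring

theorem avgFriends_fringe (hP : IsDomeGadget G d K P top mid fringe) (i : Fin d) :
    avgFriends G P (fringe i) = (#(domeBase P top mid) * (#(domeBase P top mid) - 1) + d + 2) /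
      (#(domeBase P top mid) + 1) := by
  have hS :
      insert (fringe i) (friendsIn G P (fringe i)) = insert (mid i) (domeBase P top mid) := by
    rw [hP.friendsIn_fringe, insert_comm, insert_erase (hP.fringe_mem i)]
  rw [avgFriends, hS, sum_insert (mid_notMem_domeBase i), card_insert_of_notMem
    (mid_notMem_domeBase i), hP.sum_card_friendsIn_domeBase, hP.card_friendsIn_mid]
  push_cast
  ring

theorem avgFriends_of_mem_domeBase (hP : IsDomeGadget G d K P top mid fringe) {g : N}
    (hg : g ∈ domeBase P top mid) (hnf : ∀ i, g ≠ fringe i) :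
    avgFriends G P g = (#(domeBase P top mid) * (#(domeBase P top mid) - 1) + d) /
      #(domeBase P top mid) := by
  rw [avgFriends, hP.friendsIn_of_mem_domeBase hg hnf, insert_erase hg,
    ← hP.sum_card_friendsIn_domeBase]

theorem card_friendsIn_top_le (hP : IsDomeGadget G d K P top mid fringe)
    (hA : AttachedAt G P top a a') : #(friendsIn G C top) ≤ d + 2 := by
  have hsub : friendsIn G C top ⊆ insert a (insert a' (univ.image mid)) := by
    intro z hz
    obtain ⟨-, h⟩ := mem_friendsIn.1 hz
    rcases hA top hP.top_mem z h with hzP | ⟨-, rfl | rfl⟩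
    · obtain ⟨i, rfl⟩ := (hP.adj_top_iff hzP).1 h
      simp
    all_goals simp
  have h₁ := card_insert_le a (insert a' (univ.image mid))
  have h₂ := card_insert_le a' (univ.image mid)
  have h₃ : #(univ.image mid) ≤ d := card_image_le.trans (by simp)
  have := card_le_card hsub
  omega

theorem card_friendsIn_mid_le (hP : IsDomeGadget G d K P top mid fringe)
    (hA : AttachedAt G P top a a') (i : Fin d) : #(friendsIn G C (mid i)) ≤ 2 := by
  rw [hA.friendsIn_eq_inter (hP.mid_mem i) (hP.mid_ne_top i), ← hP.card_friendsIn_mid i]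
  exact card_le_card inter_subset_left

theorem card_friendsIn_le_card_inter (hP : IsDomeGadget G d K P top mid fringe)
    (hA : AttachedAt G P top a a') {g : N} (hg : g ∈ domeBase P top mid) (hgC : g ∈ C) :
    #(friendsIn G C g) ≤ #(C ∩ domeBase P top mid) := by
  obtain ⟨m, hm⟩ : ∃ m, friendsIn G P g ⊆ insert m ((domeBase P top mid).erase g) := by
    by_cases hf : ∃ i, g = fringe i
    · obtain ⟨i, rfl⟩ := hf
      exact ⟨mid i, (hP.friendsIn_fringe i).le⟩
    · push Not at hf
      exact ⟨g, (hP.friendsIn_of_mem_domeBase hg hf).le.trans (subset_insert _ _)⟩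
  rw [hA.friendsIn_eq_inter (domeBase_subset hg) (ne_top_of_mem_domeBase hg),
    ← card_erase_add_one (mem_inter.2 ⟨hgC, hg⟩)]
  refine (card_le_card fun z hz => ?_).trans (card_insert_le m _)
  obtain ⟨hzF, hzC⟩ := mem_inter.1 hz
  rcases mem_insert.1 (hm hzF) with rfl | hz'
  · exact mem_insert_self _ _
  · obtain ⟨hzg, hzB⟩ := mem_erase.1 hz'
    exact mem_insert_of_mem (mem_erase.2 ⟨hzg, mem_inter.2 ⟨hzC, hzB⟩⟩)

theorem mem_domeBase_or_eq_mid (hP : IsDomeGadget G d K P top mid fringe)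
    (hA : AttachedAt G P top a a') {g z : N} (hg : g ∈ domeBase P top mid)
    (hz : z ∈ insert g (friendsIn G C g)) : z ∈ domeBase P top mid ∨ ∃ i, z = mid i := by
  rcases mem_insert.1 hz with rfl | hz
  · exact Or.inl hg
  obtain ⟨-, h⟩ := mem_friendsIn.1 hz
  have hzP := hA.mem_of_adj (domeBase_subset hg) (ne_top_of_mem_domeBase hg) h
  rcases (hP.adj_iff_of_mem_domeBase hg hzP).1 h with ⟨hzB, -⟩ | ⟨i, -, rfl⟩
  exacts [Or.inl hzB, Or.inr ⟨i, rfl⟩]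

end General

variable {N : Type*} [Fintype N] [DecidableEq N] {G : SimpleGraph N} {K : ℕ} {P C : Finset N}
  {top a a' : N} {mid fringe : Fin 2 → N} {Γ : CoalitionStructure N}

theorem cast_card_domeBase_bounds (hP : IsDomeGadget G 2 K P top mid fringe) (hK : 12 ≤ K)
    (hn : K ^ 2 ≤ 2 * Fintype.card N) :
    (#P : ℚ) = #(domeBase P top mid) + 3 ∧ (9 : ℚ) ≤ #(domeBase P top mid) ∧
      ((#(domeBase P top mid) : ℚ) + 3) ^ 2 ≤ 2 * Fintype.card N := by
  have h := hP.card_domeBase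
  rw [hP.card_eq]
  subst h
  refine ⟨by push_cast; ring, by exact_mod_cast (by omega : 9 ≤ #(domeBase P top mid)), ?_⟩
  exact_mod_cast hn

theorem domeBase_subset_of_blocks (hP : IsDomeGadget G 2 K P top mid fringe)
    (hA : AttachedAt G P top a a') (hΓ : ∀ i ∈ P, Γ.part i = P) (hC : Blocks (utilAvgEQ G) Γ C)
    (hK : 12 ≤ K) (hn : K ^ 2 ≤ 2 * Fintype.card N) {c : N} (hcB : c ∈ domeBase P top mid)
    (hnf : ∀ i, c ≠ fringe i) (hc : c ∈ C) : domeBase P top mid ⊆ C := by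
  obtain ⟨hPb, hb, hnb⟩ := hP.cast_card_domeBase_bounds hK hn
  set b := #(domeBase P top mid)
  by_contra hBC
  have hβ : #(C ∩ domeBase P top mid) < b :=
    card_lt_card ⟨inter_subset_right, fun h => hBC fun z hz => (mem_inter.1 (h hz)).1⟩
  have havg : avgFriends G C c ≤ b - 1 := avgFriends_le_of_forall_le fun z hz => by
    rcases hP.mem_domeBase_or_eq_mid hA hcB hz with hzB | ⟨i, rfl⟩
    · have := hP.card_friendsIn_le_card_inter hA hzB (insert_friendsIn_subset hc hz)
      exact le_sub_iff_add_le.2 (by exact_mod_cast (by omega : #(friendsIn G C z) + 1 ≤ b))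
    · have : (#(friendsIn G C (mid i)) : ℚ) ≤ 2 := by
        exact_mod_cast hP.card_friendsIn_mid_le hA i
      linarith
  have hb0 : (0 : ℚ) < b := by linarith
  refine hC.false_of_avgFriends_add_le hc (hΓ c (domeBase_subset hcB)) (δ := 2 / b) ?_ ?_
  · rw [hP.avgFriends_of_mem_domeBase hcB hnf,
      show ((b : ℚ) * (b - 1) + (2 : ℕ)) / b = b - 1 + 2 / b by field_simp; push_cast; ring]
    linarith
  · have : (1 : ℚ) ≤ #C := by exact_mod_cast card_pos.2 ⟨c, hc⟩
    rw [hPb, mul_div_assoc', le_div_iff₀ hb0]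
    nlinarith

theorem false_of_domeBase_subset_blocks (hP : IsDomeGadget G 2 K P top mid fringe)
    (hA : AttachedAt G P top a a') (hΓ : ∀ i ∈ P, Γ.part i = P) (hC : Blocks (utilAvgEQ G) Γ C)
    (hK : 12 ≤ K) (hn : K ^ 2 ≤ 2 * Fintype.card N) (hw : ∃ w ∈ C, w ∉ P.erase top) {c : N}
    (hcB : c ∈ domeBase P top mid) (hnf : ∀ i, c ≠ fringe i) (hBC : domeBase P top mid ⊆ C) :
    False := by
  obtain ⟨hPb, hb, hnb⟩ := hP.cast_card_domeBase_bounds hK hn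
  obtain ⟨w, hwC, hwP⟩ := hw
  have hc := hBC hcB
  have hcP := hΓ c (domeBase_subset hcB)
  have hFC : ∀ g ∈ domeBase P top mid, friendsIn G C g = friendsIn G P g ∩ C := fun g hg =>
    hA.friendsIn_eq_inter (domeBase_subset hg) (ne_top_of_mem_domeBase hg)
  have hSP : insert c (friendsIn G P c) = domeBase P top mid := by
    rw [hP.friendsIn_of_mem_domeBase hcB hnf, insert_erase hcB]
  have hSC : insert c (friendsIn G C c) = domeBase P top mid := by
    rw [hFC c hcB, hP.friendsIn_of_mem_domeBase hcB hnf,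
      inter_eq_left.2 ((erase_subset _ _).trans hBC), insert_erase hcB]
  have havg : ∀ D, insert c (friendsIn G D c) = domeBase P top mid → avgFriends G D c =
      ((∑ g ∈ domeBase P top mid, #(friendsIn G D g) : ℕ) : ℚ) / #(domeBase P top mid) := by
    intro D hS
    rw [avgFriends, hS, Nat.cast_sum]
  have hle : ∀ g ∈ domeBase P top mid, #(friendsIn G C g) ≤ #(friendsIn G P g) :=
    fun g hg => hFC g hg ▸ card_le_card inter_subset_left
  have hwB : w ∉ domeBase P top mid := fun h =>
    hwP (mem_erase.2 ⟨ne_top_of_mem_domeBase h, domeBase_subset h⟩)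
  set b := #(domeBase P top mid)
  have hb0 : (0 : ℚ) < b := by linarith
  by_cases hm : ∀ i, mid i ∈ C
  · have hPC : insert w (P.erase top) ⊆ C := insert_subset hwC fun z hz => by
      obtain ⟨hzt, hzP⟩ := mem_erase.1 hz
      by_cases hzm : ∃ i, z = mid i
      · obtain ⟨i, rfl⟩ := hzm
        exact hm i
      · push Not at hzm
        exact hBC (mem_domeBase.2 ⟨hzP, hzt, hzm⟩)
    have hCK : #P ≤ #C := by
      have := card_le_card hPC
      rwa [card_insert_of_notMem hwP, card_erase_add_one hP.top_mem] at this
    refine hC.false_of_avgFriends_add_le hc hcP (δ := 0) ?_ ?_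
    · rw [add_zero, havg C hSC, havg P hSP]
      exact div_le_div_of_nonneg_right (by exact_mod_cast sum_le_sum hle) hb0.le
    · have : (#P : ℚ) ≤ #C := by exact_mod_cast hCK
      linarith
  · push Not at hm
    obtain ⟨j, hj⟩ := hm
    have hlt : ∑ g ∈ domeBase P top mid, #(friendsIn G C g) <
        ∑ g ∈ domeBase P top mid, #(friendsIn G P g) := by
      refine sum_lt_sum hle ⟨fringe j, hP.fringe_mem j, ?_⟩
      rw [hFC _ (hP.fringe_mem j)]
      refine card_lt_card ⟨inter_subset_left, fun h => hj (mem_inter.1 (h ?_)).2⟩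
      rw [hP.friendsIn_fringe]
      exact mem_insert_self _ _
    have hbC : (b : ℚ) + 1 ≤ #C := by
      have := card_le_card (insert_subset hwC hBC)
      rw [card_insert_of_notMem hwB] at this
      exact_mod_cast this
    refine hC.false_of_avgFriends_add_le hc hcP (δ := 1 / b) ?_ ?_
    · rw [havg C hSC, havg P hSP, ← add_div]
      exact div_le_div_of_nonneg_right (by exact_mod_cast hlt) hb0.le
    · rw [hPb, mul_one_div, le_div_iff₀ hb0]
      nlinarith

theorem three_le_card_inter_domeBase_of_blocks (hP : IsDomeGadget G 2 K P top mid fringe)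
    (hA : AttachedAt G P top a a') (hΓ : ∀ i ∈ P, Γ.part i = P) (hC : Blocks (utilAvgEQ G) Γ C)
    (hK : 12 ≤ K) (hn : K ^ 2 ≤ 2 * Fintype.card N) {i : Fin 2} (hi : fringe i ∈ C) :
    3 ≤ #(C ∩ domeBase P top mid) := by
  obtain ⟨hPb, hb, hnb⟩ := hP.cast_card_domeBase_bounds hK hn
  by_contra! hβ
  have havg : avgFriends G C (fringe i) ≤ 2 := avgFriends_le_of_forall_le fun z hz => by
    rcases hP.mem_domeBase_or_eq_mid hA (hP.fringe_mem i) hz with hzB | ⟨j, rfl⟩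
    · have := hP.card_friendsIn_le_card_inter hA hzB (insert_friendsIn_subset hi hz)
      exact_mod_cast (by omega : #(friendsIn G C z) ≤ 2)
    · exact_mod_cast hP.card_friendsIn_mid_le hA j
  set b := #(domeBase P top mid)
  refine hC.false_of_avgFriends_add_le hi (hΓ _ (domeBase_subset (hP.fringe_mem i))) (δ := 1)
    ?_ ?_
  · rw [hP.avgFriends_fringe, le_div_iff₀ (by positivity)]
    push_cast
    nlinarith
  · have : (1 : ℚ) ≤ #C := by exact_mod_cast card_pos.2 ⟨_, hi⟩
    nlinarith

theorem notMem_of_mem_domeBase_of_blocks (hP : IsDomeGadget G 2 K P top mid fringe)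
    (hA : AttachedAt G P top a a') (hΓ : ∀ i ∈ P, Γ.part i = P) (hC : Blocks (utilAvgEQ G) Γ C)
    (hK : 12 ≤ K) (hn : K ^ 2 ≤ 2 * Fintype.card N) (hw : ∃ w ∈ C, w ∉ P.erase top) {z : N}
    (hz : z ∈ domeBase P top mid) : z ∉ C := by
  have hfringe : ∀ c ∈ C ∩ domeBase P top mid, c ∈ ({fringe 0, fringe 1} : Finset N) := by
    intro c hc
    obtain ⟨hcC, hcB⟩ := mem_inter.1 hc
    by_contra hnf
    simp only [mem_insert, mem_singleton, not_or] at hnf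
    have hnf' : ∀ i, c ≠ fringe i := by
      intro i
      fin_cases i
      exacts [hnf.1, hnf.2]
    exact hP.false_of_domeBase_subset_blocks hA hΓ hC hK hn hw hcB hnf'
      (hP.domeBase_subset_of_blocks hA hΓ hC hK hn hcB hnf' hcC)
  intro hzC
  obtain ⟨i, hi⟩ : ∃ i, z = fringe i := by
    simpa [Fin.exists_fin_two, eq_comm] using hfringe z (mem_inter.2 ⟨hzC, hz⟩)
  have h3 := hP.three_le_card_inter_domeBase_of_blocks hA hΓ hC hK hn (hi ▸ hzC)
  have h2 := (card_le_card hfringe).trans (card_le_two (a := fringe 0) (b := fringe 1))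
  omega

theorem mid_notMem_of_blocks (hP : IsDomeGadget G 2 K P top mid fringe)
    (hA : AttachedAt G P top a a') (hΓ : ∀ i ∈ P, Γ.part i = P) (hC : Blocks (utilAvgEQ G) Γ C)
    (hK : 12 ≤ K) (hn : K ^ 2 ≤ 2 * Fintype.card N) (hB : ∀ z ∈ domeBase P top mid, z ∉ C)
    (i : Fin 2) : mid i ∉ C := by
  intro hi
  obtain ⟨hPb, hb, hnb⟩ := hP.cast_card_domeBase_bounds hK hn
  have havg : avgFriends G C (mid i) ≤ 4 := avgFriends_le_of_forall_le fun z hz => by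
    rcases mem_insert.1 hz with rfl | hz
    · have := hP.card_friendsIn_mid_le hA i (C := C)
      exact_mod_cast (by omega : #(friendsIn G C (mid i)) ≤ 4)
    · obtain ⟨hzC, h⟩ := mem_friendsIn.1 hz
      have hzP := hA.mem_of_adj (hP.mid_mem i) (hP.mid_ne_top i) h
      rcases (hP.adj_mid_iff i hzP).1 h with rfl | rfl
      · exact_mod_cast hP.card_friendsIn_top_le hA (C := C)
      · exact absurd hzC (hB _ (hP.fringe_mem i))
  refine hC.false_of_avgFriends_add_le hi (hΓ _ (hP.mid_mem i))
    (δ := (#(domeBase P top mid) + 4) / 3 - 4) ?_ ?_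
  · rw [hP.avgFriends_mid]
    push_cast
    linarith
  · have : (1 : ℚ) ≤ #C := by exact_mod_cast card_pos.2 ⟨_, hi⟩
    nlinarith

theorem inter_subset_top_of_blocks (hP : IsDomeGadget G 2 K P top mid fringe)
    (hA : AttachedAt G P top a a') (hΓ : ∀ i ∈ P, Γ.part i = P) (hC : Blocks (utilAvgEQ G) Γ C)
    (hK : 12 ≤ K) (hn : K ^ 2 ≤ 2 * Fintype.card N) (hw : ∃ w ∈ C, w ∉ P.erase top) :
    C ∩ P ⊆ {top} := by
  have hB : ∀ z ∈ domeBase P top mid, z ∉ C := fun _ =>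
    hP.notMem_of_mem_domeBase_of_blocks hA hΓ hC hK hn hw
  intro z hz
  obtain ⟨hzC, hzP⟩ := mem_inter.1 hz
  by_contra hzt
  by_cases hzm : ∃ i, z = mid i
  · obtain ⟨i, rfl⟩ := hzm
    exact hP.mid_notMem_of_blocks hA hΓ hC hK hn hB i hzC
  · push Not at hzm
    exact hB z (mem_domeBase.2 ⟨hzP, mem_singleton.not.1 hzt, hzm⟩) hzC

end IsDomeGadget

theorem cast_avgK' (k : ℕ) : (avgK' k : ℚ) = k + 3 * (k * (k - 1) / 2) + 1 := by
  simp [avgK', Nat.cast_choose_two]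

theorem twelve_le_avgK' {k : ℕ} (hk : 3 ≤ k) : 12 ≤ avgK' k := by
  have hk' : (3 : ℚ) ≤ k := by exact_mod_cast hk
  have : (12 : ℚ) ≤ avgK' k := by rw [cast_avgK']; nlinarith
  exact_mod_cast this

theorem avgK'_le_two_mul_sq {k : ℕ} (hk : 1 ≤ k) : avgK' k ≤ 2 * k ^ 2 := by
  have hk' : (1 : ℚ) ≤ k := by exact_mod_cast hk
  have : (avgK' k : ℚ) ≤ 2 * k ^ 2 := by rw [cast_avgK']; nlinarith
  exact_mod_cast this

namespace AvgEQReduction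

variable {N V : Type*} [DecidableEq N] {H : SimpleGraph V} {k : ℕ} {G : SimpleGraph N}
  {Pv : V → Finset N} {Pe : Sym2 V → Finset N} {Pve : V → Sym2 V → Finset N} {vp : V → N}
  {ep : Sym2 V → N} {bp : V → Sym2 V → N}

theorem vp_mem (R : AvgEQReduction H k G Pv Pe Pve vp ep bp) (v : V) : vp v ∈ Pv v :=
  let ⟨_, _, hD⟩ := R.dome_v v; hD.top_mem

theorem ep_mem (R : AvgEQReduction H k G Pv Pe Pve vp ep bp) {e : Sym2 V}
    (he : e ∈ H.edgeSet) : ep e ∈ Pe e :=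
  let ⟨_, _, hD⟩ := R.dome_e e he; hD.top_mem

theorem bp_mem (R : AvgEQReduction H k G Pv Pe Pve vp ep bp) {v : V} {e : Sym2 V}
    (he : e ∈ H.edgeSet) (hv : v ∈ e) : bp v e ∈ Pve v e :=
  let ⟨_, _, hD⟩ := R.dome_ve v e he hv; hD.top_mem

theorem eq_of_mem_Pe (R : AvgEQReduction H k G Pv Pe Pve vp ep bp) {e f : Sym2 V}
    (he : e ∈ H.edgeSet) (hf : f ∈ H.edgeSet) {g : N} (hge : g ∈ Pe e) (hgf : g ∈ Pe f) :
    e = f :=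
  by_contra fun h => disjoint_left.1 (R.disj_ee e he f hf h) hge hgf

theorem eq_of_mem_Pve (R : AvgEQReduction H k G Pv Pe Pve vp ep bp) {v w : V} {e f : Sym2 V}
    (he : e ∈ H.edgeSet) (hv : v ∈ e) (hf : f ∈ H.edgeSet) (hw : w ∈ f) {g : N}
    (hge : g ∈ Pve v e) (hgf : g ∈ Pve w f) : v = w ∧ e = f := by
  by_contra h
  exact disjoint_left.1 (R.disj_bb v e he hv w f hf hw fun h' => h (Prod.mk.inj h')) hge hgf

theorem attachedAt_Pe (R : AvgEQReduction H k G Pv Pe Pve vp ep bp) {x y : V}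
    (hxy : H.Adj x y) : AttachedAt G (Pe s(x, y)) (ep s(x, y)) (bp x s(x, y)) (bp y s(x, y)) := by
  intro g hg z h
  have he : s(x, y) ∈ H.edgeSet := hxy
  rcases R.adj_cases g z h with ⟨v, hgv, -⟩ | ⟨f, hf, hgf, hzf⟩ | ⟨v, f, hf, hvf, hgb, -⟩
    | ⟨v, f, hf, hvf, ⟨rfl, -⟩ | ⟨-, rfl⟩⟩ | ⟨v, f, hf, hvf, ⟨rfl, -⟩ | ⟨rfl, rfl⟩⟩
  · exact absurd hg (disjoint_left.1 (R.disj_v_e v _ he) hgv)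
  · exact Or.inl (R.eq_of_mem_Pe hf he hgf hg ▸ hzf)
  · exact absurd hgb (disjoint_left.1 (R.disj_e_b _ he v f hf hvf) hg)
  · exact absurd (R.bp_mem hf hvf) (disjoint_left.1 (R.disj_e_b _ he v f hf hvf) hg)
  · exact absurd hg (disjoint_left.1 (R.disj_v_e v _ he) (R.vp_mem v))
  · exact absurd (R.bp_mem hf hvf) (disjoint_left.1 (R.disj_e_b _ he v f hf hvf) hg)
  · obtain rfl := R.eq_of_mem_Pe hf he (R.ep_mem hf) hg
    rcases Sym2.mem_iff.1 hvf with rfl | rfl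
    exacts [Or.inr ⟨rfl, Or.inl rfl⟩, Or.inr ⟨rfl, Or.inr rfl⟩]

theorem attachedAt_Pve (R : AvgEQReduction H k G Pv Pe Pve vp ep bp) {v : V} {e : Sym2 V}
    (he : e ∈ H.edgeSet) (hv : v ∈ e) : AttachedAt G (Pve v e) (bp v e) (vp v) (ep e) := by
  intro g hg z h
  rcases R.adj_cases g z h with ⟨w, hgw, -⟩ | ⟨f, hf, hgf, -⟩ | ⟨w, f, hf, hwf, hgb, hzb⟩
    | ⟨w, f, hf, hwf, ⟨rfl, rfl⟩ | ⟨-, rfl⟩⟩ | ⟨w, f, hf, hwf, ⟨rfl, rfl⟩ | ⟨-, rfl⟩⟩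
  · exact absurd hg (disjoint_left.1 (R.disj_v_b w v e he hv) hgw)
  · exact absurd hg (disjoint_left.1 (R.disj_e_b f hf v e he hv) hgf)
  · obtain ⟨rfl, rfl⟩ := R.eq_of_mem_Pve hf hwf he hv hgb hg
    exact Or.inl hzb
  · obtain ⟨rfl, rfl⟩ := R.eq_of_mem_Pve hf hwf he hv (R.bp_mem hf hwf) hg
    exact Or.inr ⟨rfl, Or.inl rfl⟩
  · exact absurd hg (disjoint_left.1 (R.disj_v_b w v e he hv) (R.vp_mem w))
  · obtain ⟨rfl, rfl⟩ := R.eq_of_mem_Pve hf hwf he hv (R.bp_mem hf hwf) hg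
    exact Or.inr ⟨rfl, Or.inr rfl⟩
  · exact absurd hg (disjoint_left.1 (R.disj_e_b f hf v e he hv) (R.ep_mem hf))

theorem avgK'_mul_le_card [Fintype N] [Fintype V]
    (R : AvgEQReduction H k G Pv Pe Pve vp ep bp) :
    avgK' k * (Fintype.card V + #H.edgeFinset) ≤ Fintype.card N := by
  have hV : #(univ.biUnion Pv) = Fintype.card V * avgK' k := by
    rw [card_biUnion fun v _ w _ h => R.disj_vv v w h,
      sum_congr rfl fun v _ => (R.dome_v v).choose_spec.choose_spec.card_eq, sum_const, card_univ,
      smul_eq_mul]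
  have hE : #(H.edgeFinset.biUnion Pe) = #H.edgeFinset * avgK' k := by
    rw [card_biUnion fun e he f hf h =>
        R.disj_ee e (SimpleGraph.mem_edgeFinset.1 he) f (SimpleGraph.mem_edgeFinset.1 hf) h,
      sum_congr rfl fun e he =>
        (R.dome_e e (SimpleGraph.mem_edgeFinset.1 he)).choose_spec.choose_spec.card_eq,
      sum_const, smul_eq_mul]
  have hdisj : Disjoint (univ.biUnion Pv) (H.edgeFinset.biUnion Pe) := by
    refine (disjoint_biUnion_left _ _ _).2 fun v _ => (disjoint_biUnion_right _ _ _).2 fun e he =>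
      R.disj_v_e v e (SimpleGraph.mem_edgeFinset.1 he)
  have := card_le_univ (univ.biUnion Pv ∪ H.edgeFinset.biUnion Pe)
  rw [card_union_of_disjoint hdisj, hV, hE] at this
  linarith

theorem sq_avgK'_le_two_mul_card [Fintype N] [Fintype V]
    (R : AvgEQReduction H k G Pv Pe Pve vp ep bp) (hk : 1 ≤ k)
    (hsize : k ^ 2 ≤ Fintype.card V + #H.edgeFinset) : avgK' k ^ 2 ≤ 2 * Fintype.card N := by
  have := avgK'_le_two_mul_sq hk
  have := R.avgK'_mul_le_card
  nlinarith

theorem avgFriends_ep_le_or_eq [Fintype N] {Γ : CoalitionStructure N} {C : Finset N}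
    (R : AvgEQReduction H k G Pv Pe Pve vp ep bp) (hΓ : IsAvgGamma H Pv Pe Pve Γ)
    (hC : Blocks (utilAvgEQ G) Γ C) (hK : 12 ≤ avgK' k) (hn : avgK' k ^ 2 ≤ 2 * Fintype.card N)
    {x y : V} (hxy : H.Adj x y) (he : ep s(x, y) ∈ C) :
    avgFriends G C (ep s(x, y)) ≤ 5 / 3 ∨ (bp x s(x, y) ∈ C ∧ bp y s(x, y) ∈ C ∧ vp x ∈ C ∧
      vp y ∈ C ∧ avgFriends G C (ep s(x, y)) = 2) := by
  obtain ⟨-, hΓe, hΓve⟩ := hΓ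
  have hE : s(x, y) ∈ H.edgeSet := hxy
  have hx : x ∈ s(x, y) := Sym2.mem_mk_left x y
  have hy : y ∈ s(x, y) := Sym2.mem_mk_right x y
  have hbe : ∀ v ∈ s(x, y), G.Adj (ep s(x, y)) (bp v s(x, y)) :=
    fun v hv => (R.adj_be v _ hE hv).symm
  obtain ⟨_, _, hPe⟩ := R.dome_e _ hE
  have hCe := hPe.inter_subset_top_of_blocks (R.attachedAt_Pe hxy) (hΓe _ hE) hC hK hn
    ⟨_, he, fun h => ne_of_mem_erase h rfl⟩
  have hFb : ∀ v ∈ s(x, y), friendsIn G C (bp v s(x, y)) = {vp v, ep s(x, y)} ∩ C := by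
    intro v hv
    obtain ⟨_, _, hPv⟩ := R.dome_ve v _ hE hv
    have hep : ep s(x, y) ∉ Pve v s(x, y) :=
      disjoint_left.1 (R.disj_e_b _ hE v _ hE hv) (R.ep_mem hE)
    have hCv := hPv.inter_subset_top_of_blocks (R.attachedAt_Pve hE hv) (hΓve v _ hE hv) hC hK
      hn ⟨_, he, fun h => hep (mem_of_mem_erase h)⟩
    exact (R.attachedAt_Pve hE hv).friendsIn_top_eq hPv.top_mem hCv (R.adj_bv v _ hE hv)
      (hbe v hv).symm
  have hvep : ∀ v, vp v ≠ ep s(x, y) := fun v h =>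
    disjoint_left.1 (R.disj_v_e v _ hE) (R.vp_mem v) (h ▸ R.ep_mem hE)
  have hbxy : bp x s(x, y) ≠ bp y s(x, y) := fun h =>
    hxy.ne (R.eq_of_mem_Pve hE hx hE hy (R.bp_mem hE hx) (h ▸ R.bp_mem hE hy)).1
  exact avgFriends_le_or_eq_of_path he hbxy (hbe x hx).ne (hbe y hy).ne (hvep x) (hvep y)
    ((R.attachedAt_Pe hxy).friendsIn_top_eq hPe.top_mem hCe (hbe x hx) (hbe y hy))
    (hFb x hx) (hFb y hy)

end AvgEQReduction

theorem avgEQ_edge_player_in_blocking_general {V N : Type*} [Fintype V]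
    [Fintype N] [DecidableEq N]
    (H : SimpleGraph V) (k : ℕ) (hk : 4 ≤ k)
    (hsize : k ^ 2 ≤ Fintype.card V + H.edgeFinset.card)
    (G : SimpleGraph N) (Pv : V → Finset N) (Pe : Sym2 V → Finset N)
    (Pve : V → Sym2 V → Finset N)
    (vp : V → N) (ep : Sym2 V → N) (bp : V → Sym2 V → N)
    (R : AvgEQReduction H k G Pv Pe Pve vp ep bp)
    (Γ : CoalitionStructure N) (hΓ : IsAvgGamma H Pv Pe Pve Γ)
    (C : Finset N) (hC : Blocks (utilAvgEQ G) Γ C)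
    (x y : V) (hxy : H.Adj x y) (he : ep s(x, y) ∈ C) :
    bp x s(x, y) ∈ C ∧ bp y s(x, y) ∈ C ∧ vp x ∈ C ∧ vp y ∈ C ∧ C.card < avgK' k := by
  have hK := twelve_le_avgK' (by omega : 3 ≤ k)
  have hn := R.sq_avgK'_le_two_mul_card (by omega) hsize
  obtain ⟨_, _, hPe⟩ := R.dome_e s(x, y) hxy
  have hpart := hΓ.2.1 s(x, y) hxy _ hPe.top_mem
  rcases R.avgFriends_ep_le_or_eq hΓ hC hK hn hxy he with hlow | ⟨hbx, hby, hvx, hvy, havg⟩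
  · refine (hC.false_of_avgFriends_add_le he hpart (δ := 1 / 3) ?_ ?_).elim
    · rw [hPe.avgFriends_top]
      norm_num
      linarith
    · have : (1 : ℚ) ≤ #C := by exact_mod_cast card_pos.2 ⟨_, he⟩
      have hK' : (12 : ℚ) ≤ avgK' k := by exact_mod_cast hK
      have hn' : (avgK' k : ℚ) ^ 2 ≤ 2 * Fintype.card N := by exact_mod_cast hn
      rw [hPe.card_eq]
      nlinarith
  · refine ⟨hbx, hby, hvx, hvy, ?_⟩
    have := hC.avgFriends_sub_lt he hpart
    rw [hPe.avgFriends_top, havg, hPe.card_eq] at this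
    norm_num at this
    exact_mod_cast this

/-- Claim 3: in the avg-EQ reduction instance, if a coalition `C` blocks `Γ` and the
edge player of an edge `e = xy` belongs to `C`, then `b_{x,e}, b_{y,e}, x', y' ∈ C`
and `|C| < k'`. -/
theorem avgEQ_edge_player_in_blocking {V N : Type*} [Fintype V] [DecidableEq V]
    [Fintype N] [DecidableEq N]
    (H : SimpleGraph V) (k : ℕ) (hk : 4 ≤ k)
    (hsize : k ^ 2 ≤ Fintype.card V + H.edgeFinset.card)
    (G : SimpleGraph N) (Pv : V → Finset N) (Pe : Sym2 V → Finset N)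
    (Pve : V → Sym2 V → Finset N)
    (vp : V → N) (ep : Sym2 V → N) (bp : V → Sym2 V → N)
    (R : AvgEQReduction H k G Pv Pe Pve vp ep bp)
    (Γ : CoalitionStructure N) (hΓ : IsAvgGamma H Pv Pe Pve Γ)
    (C : Finset N) (hC : Blocks (utilAvgEQ G) Γ C)
    (x y : V) (hxy : H.Adj x y) (he : ep s(x, y) ∈ C) :
    bp x s(x, y) ∈ C ∧ bp y s(x, y) ∈ C ∧ vp x ∈ C ∧ vp y ∈ C ∧ C.card < avgK' k :=
  avgEQ_edge_player_in_blocking_general H k hk hsize G Pv Pe Pve vp ep bp R Γ hΓ C hC x y hxy he
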